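/- For positive reals a, γ with γ < a < 2γ, setting u₀ = 4γ(a−γ)/(a(4γ−a)) and r = (aγ/(2γ−a))(1−u₀)^{2−a/2γ}, the value (γ + a/2)²·u₀³/3 + (4γ/a²)(a−γ)·r²·(1−u₀)^{a/γ−1} equals γ²·η₁(a/γ), where η₁(x) = (4/3)(x+2)²(x−1)/(x³(4−x)). -/

import Mathlib

/-!
Since `1 - u₀ = (2γ - a)(2γ + a) / (a(4γ - a))`, the exponents combine to
`r² (1 - u₀)^(a/γ - 1) = (aγ/(2γ - a))² (1 - u₀)³`, so the left side is a rational function of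
`a, γ`. Over the common denominator `3a³(4γ - a)³` the bracket
`3(2γ + a)(2γ - a) + 4(a - γ)² = (4γ - a)²` cancels two powers of `4γ - a`, leaving
`(4/3) γ³ (a - γ)(a + 2γ)² / (a³ (4γ - a))`, which is `γ² η₁(a/γ)`.
-/

noncomputable def eta1 (x : ℝ) : ℝ := (4/3) * ((x + 2)^2 * (x - 1)) / (x^3 * (4 - x))

lemma sq_mul_rpow_mul_rpow {x : ℝ} (hx : 0 < x) (c p q : ℝ) :
    (c * x ^ p) ^ 2 * x ^ q = c ^ 2 * x ^ (2 * p + q) := by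
  rw [mul_pow, ← Real.rpow_natCast (x ^ p), ← Real.rpow_mul hx.le, mul_assoc,
    ← Real.rpow_add hx]
  norm_num [mul_comm]

lemma sq_mul_eta1_div {a γ : ℝ} (hγ : γ ≠ 0) (ha : a ≠ 0) (hγa : 4 * γ - a ≠ 0) :
    γ ^ 2 * eta1 (a / γ) = 4 * γ ^ 3 * (a - γ) * (a + 2 * γ) ^ 2 / (3 * a ^ 3 * (4 * γ - a)) := by
  have h4 : 4 - a / γ ≠ 0 := by
    rw [sub_div' hγ]; exact div_ne_zero hγa hγ
  rw [eta1]
  field_simp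

theorem stmt_14 (a γ u₀ r : ℝ) (hγ : 0 < γ) (h1 : γ < a) (h2 : a < 2 * γ)
    (hu₀ : u₀ = 4 * γ * (a - γ) / (a * (4 * γ - a)))
    (hr : r = (a * γ / (2 * γ - a)) * (1 - u₀) ^ (2 - a / (2 * γ))) :
    (γ + a/2)^2 * u₀^3 / 3
      + (4 * γ / a^2) * (a - γ) * r^2 * (1 - u₀) ^ (a / γ - 1)
    = γ^2 * eta1 (a / γ) := by
  have ha : 0 < a := hγ.trans h1
  have h4γa : 0 < 4 * γ - a := by linarith
  have h2γa : 0 < 2 * γ - a := by linarith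
  have h1u₀ : 1 - u₀ = (2 * γ - a) * (2 * γ + a) / (a * (4 * γ - a)) := by
    rw [hu₀]; field_simp; ring
  have h1u₀_pos : 0 < 1 - u₀ := by rw [h1u₀]; positivity
  have hexp : 2 * (2 - a / (2 * γ)) + (a / γ - 1) = (3 : ℕ) := by
    field_simp; norm_num; ring
  have hr_term : r ^ 2 * (1 - u₀) ^ (a / γ - 1) = (a * γ / (2 * γ - a)) ^ 2 * (1 - u₀) ^ 3 := by
    rw [hr, sq_mul_rpow_mul_rpow h1u₀_pos, hexp, Real.rpow_natCast]
  rw [mul_assoc _ (r ^ 2), hr_term, h1u₀, hu₀, sq_mul_eta1_div hγ.ne' ha.ne' h4γa.ne']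
  -- stated in `field_simp`'s normal form, which it does not match against `4 * γ - a ≠ 0`
  have h4γa' : γ * 4 - a ≠ 0 := by linarith
  field_simp
  ring
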